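/- If A is a closed densely defined operator on a Hilbert space and J is a bounded invertible operator with J A = A* J, then the spectrum of A is symmetric with respect to the real axis: z ∈ σ(A) if and only if z̄ ∈ σ(A). -/

import Mathlib

/-! `J` conjugates `A` into `A† = star A`, and conjugation by a unit preserves the spectrum,
so `σ(A) = σ(star A) = star σ(A)`. -/

theorem spectrum.star_mem_iff_of_star_eq_units_conjugate {R A : Type*} [CommSemiring R]
    [InvolutiveStar R] [Ring A] [Algebra R A] [StarRing A] [StarModule R A]
    {a : A} (u : Aˣ) (h : star a = u * a * ↑u⁻¹) {r : R} :
    star r ∈ spectrum R a ↔ r ∈ spectrum R a := by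
  rw [← Set.mem_star, ← spectrum.map_star, h, spectrum.units_conjugate]

theorem ContinuousLinearMap.eq_conj_of_comp_eq_comp {R M : Type*} [Semiring R]
    [TopologicalSpace M] [AddCommMonoid M] [Module R M] {A B J J' : M →L[R] M}
    (hJJ' : J ∘L J' = 1) (h : J ∘L A = B ∘L J) : B = J ∘L A ∘L J' := by
  rw [← comp_assoc, h, comp_assoc, hJJ']
  rfl

/-- If `J` is boundedly invertible and `J A = A* J`, then the spectrum of `A` is
symmetric with respect to the real axis. -/
theorem spectrum_conj_symmetric
    {H : Type*} [NormedAddCommGroup H] [InnerProductSpace ℂ H] [CompleteSpace H]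
    (A J J' : H →L[ℂ] H) (hJJ' : J ∘L J' = 1) (hJ'J : J' ∘L J = 1)
    (hintertwine : J ∘L A = ContinuousLinearMap.adjoint A ∘L J) :
    ∀ z : ℂ, z ∈ spectrum ℂ A ↔ (starRingEnd ℂ) z ∈ spectrum ℂ A := by
  let u : (H →L[ℂ] H)ˣ := ⟨J, J', hJJ', hJ'J⟩
  have hstar : star A = u * A * ↑u⁻¹ := by
    rw [ContinuousLinearMap.star_eq_adjoint,
      ContinuousLinearMap.eq_conj_of_comp_eq_comp hJJ' hintertwine]
    rfl
  intro z
  exact (spectrum.star_mem_iff_of_star_eq_units_conjugate u hstar).symm
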